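/- Let n ≥ 2. In the polynomial ring ℝ[x_v : v ∈ {0,1}^n], the quartic polynomial D = d₂ + ⋯ + d_n − d₁ admits a representation as a sum of exactly N squares of homogeneous degree-2 polynomials, where N = 2^{2n−5}(3n−5) − 2^{n−3}(n²−n−1); this number N is a non-negative integer for all n ≥ 2 (in particular N = 0 for n = 2, N = 3 for n = 3, and N = 34 for n = 4). -/

import Mathlib

/-!
Index the variables by the group `V = (ℤ/2)ⁿ` of Boolean vectors under `∆`. For `w, c ∈ V` let
`Q_{w,c} = ∑_a (-1)^|c ∧ a| x_a x_{a+w}` be the Walsh transform of `a ↦ x_a x_{a+w}` at `c`.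
Orthogonality of the characters `a ↦ (-1)^|c ∧ a|` gives `∑_{w_k = c_k = 1} Q_{w,c}² = 2ⁿ d_k`
for every `k`, hence
`2ⁿ (d₂ + ⋯ + d_n - d₁) = ∑_{w,c} (|w ∧ c| - 2 [w₁ = c₁ = 1]) Q_{w,c}²`.
If `|w ∧ c|` is odd then `Q_{w,c} = 0`, and if it is even the coefficient is non-negative, so this
is a sum of squares with one square for each pair with a positive coefficient. Counting these pairs
along the fibres of `(w, c) ↦ w ∧ c`, which have `3^(n - |t|)` elements, shows that there are at
most `N` of them (and at least one when `n ≥ 3`); splitting one square into equal parts brings the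
number of squares to exactly `N`.
-/

open MvPolynomial

/-- The multi-index in `{0,1}^n` with `k`-th coordinate `b` and remaining coordinates `r`. -/
def iotaIdx (n : ℕ) (k : Fin n) (b : Bool) (r : {j : Fin n // j ≠ k} → Bool) : Fin n → Bool :=
  fun j => if h : j = k then b else r ⟨j, h⟩

/-- The `k`-th Gram determinant of the generic binary tensor, as a polynomial in the
variables `x_v`, `v ∈ {0,1}^n`. -/
noncomputable def gramDetPoly (n : ℕ) (k : Fin n) : MvPolynomial (Fin n → Bool) ℝ :=
  (∑ r : {j : Fin n // j ≠ k} → Bool, (X (iotaIdx n k false r)) ^ 2) *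
    (∑ r : {j : Fin n // j ≠ k} → Bool, (X (iotaIdx n k true r)) ^ 2) -
  (∑ r : {j : Fin n // j ≠ k} → Bool, X (iotaIdx n k false r) * X (iotaIdx n k true r)) ^ 2

open Finset
open scoped symmDiff

namespace BoolCube

variable {ι : Type*} [Fintype ι]

def weight (t : ι → Bool) : ℕ := #{j | t j}

@[simp]
lemma weight_bot : weight (⊥ : ι → Bool) = 0 := by
  simp [weight]

lemma weight_eq_zero_iff {t : ι → Bool} : weight t = 0 ↔ t = ⊥ := by
  simp [weight, filter_eq_empty_iff, funext_iff]

section CommRing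

variable {R : Type*} [CommRing R]

lemma neg_one_pow_weight (t : ι → Bool) :
    (-1 : R) ^ weight t = ∏ j, if t j then -1 else 1 := by
  rw [prod_ite, prod_const, prod_const_one, mul_one, weight]

lemma neg_one_pow_weight_inf_mul (c a b : ι → Bool) :
    (-1 : R) ^ weight (c ⊓ a) * (-1) ^ weight (c ⊓ b) = (-1) ^ weight (c ⊓ (a ∆ b)) := by
  simp only [neg_one_pow_weight, ← prod_mul_distrib, Pi.inf_apply, Pi.symmDiff_apply]
  have key : ∀ x y z : Bool, ((if x ⊓ y then (-1 : R) else 1) * if x ⊓ z then -1 else 1) =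
      if x ⊓ (y ∆ z) then -1 else 1 := by
    intro x y z
    cases x <;> cases y <;> cases z <;> simp [Bool.symmDiff_eq_xor]
  exact prod_congr rfl fun j _ => key _ _ _

end CommRing

variable [DecidableEq ι]

def unitVec (k : ι) : ι → Bool := fun j => decide (j = k)

lemma sum_pair_prod_inf {R : Type*} [CommSemiring R] (g : ι → Bool → R) :
    ∑ p : (ι → Bool) × (ι → Bool), ∏ j, g j (p.1 j ⊓ p.2 j) = ∏ j, (3 * g j false + g j true) := by
  rw [Fintype.sum_prod_type]
  calc ∑ w : ι → Bool, ∑ c : ι → Bool, ∏ j, g j (w j ⊓ c j)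
      = ∑ w : ι → Bool, ∏ j, ∑ y, g j (w j ⊓ y) :=
        sum_congr rfl fun w _ => (Fintype.prod_sum fun j y => g j (w j ⊓ y)).symm
    _ = ∏ j, ∑ x, ∑ y, g j (x ⊓ y) := (Fintype.prod_sum fun j x => ∑ y, g j (x ⊓ y)).symm
    _ = ∏ j, (3 * g j false + g j true) := by
        refine prod_congr rfl fun j _ => ?_
        simp only [Fintype.sum_bool]
        change g j true + g j false + (g j false + g j false) = _
        ring

lemma sum_neg_one_pow_weight_inf (t : ι → Bool) :
    ∑ c, (-1 : ℤ) ^ weight (c ⊓ t) = if t = ⊥ then 2 ^ Fintype.card ι else 0 := by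
  simp only [neg_one_pow_weight, Pi.inf_apply]
  rw [← Fintype.prod_sum (fun j x => if (x ⊓ t j) = true then (-1 : ℤ) else 1)]
  have h : ∀ j, ∑ x : Bool, (if (x ⊓ t j) = true then (-1 : ℤ) else 1) =
      if t j = false then 2 else 0 := fun j => by cases t j <;> decide
  simp only [h, prod_ite_zero, prod_const, card_univ, mem_univ, true_implies, funext_iff]
  rfl

lemma neg_one_pow_weight_inf_unitVec (c : ι → Bool) (k : ι) :
    (-1 : ℤ) ^ weight (c ⊓ unitVec k) = if c k then -1 else 1 := by
  rw [neg_one_pow_weight, Fintype.prod_eq_single k fun j hj => by simp [unitVec, hj]]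
  simp [unitVec]

lemma sum_filter_neg_one_pow_weight_inf (k : ι) (t : ι → Bool) :
    ∑ c with c k, (-1 : ℤ) ^ weight (c ⊓ t) =
      2 ^ (Fintype.card ι - 1) * ((if t = ⊥ then 1 else 0) - if t = unitVec k then 1 else 0) := by
  have hcard : (2 : ℤ) ^ Fintype.card ι = 2 * 2 ^ (Fintype.card ι - 1) := by
    have : Nonempty ι := ⟨k⟩
    rw [← pow_succ', Nat.sub_add_cancel Fintype.card_pos]
  -- `c k` is read off the character at `unitVec k`: `2 [c k] = 1 - (-1)^|c ⊓ unitVec k|`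
  have key : 2 * ∑ c with c k, (-1 : ℤ) ^ weight (c ⊓ t) =
      ∑ c, (-1) ^ weight (c ⊓ t) - ∑ c, (-1) ^ weight (c ⊓ (unitVec k ∆ t)) := by
    rw [sum_filter, mul_sum, ← sum_sub_distrib]
    refine sum_congr rfl fun c _ => ?_
    rw [← neg_one_pow_weight_inf_mul, neg_one_pow_weight_inf_unitVec]
    split_ifs <;> ring
  simp only [sum_neg_one_pow_weight_inf, symmDiff_eq_bot, hcard, eq_comm (a := unitVec k)] at key
  refine mul_left_cancel₀ two_ne_zero (key.trans ?_)
  split_ifs <;> ring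

lemma sum_sum_symmDiff_mul_mul_sub {R : Type*} [CommRing R] (u v : (ι → Bool) → R) :
    ∑ s, ∑ r, u r * v (r ∆ s) * (u r * v (r ∆ s) - v r * u (r ∆ s)) =
      (∑ r, u r ^ 2) * (∑ r, v r ^ 2) - (∑ r, u r * v r) ^ 2 := by
  calc _ = ∑ r, ∑ s, u r * v (r ∆ s) * (u r * v (r ∆ s) - v r * u (r ∆ s)) := sum_comm
    _ = ∑ r, ∑ s, u r * v s * (u r * v s - v r * u s) :=
        sum_congr rfl fun r _ => Equiv.sum_comp (symmDiff_right_involutive r).toPerm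
          (fun s => u r * v s * (u r * v s - v r * u s))
    _ = _ := by
        simp only [mul_sub, sum_sub_distrib, sq, sum_mul_sum]
        congr 1 <;> exact sum_congr rfl fun r _ => sum_congr rfl fun s _ => by ring

section Walsh

variable {R : Type*} [CommRing R]

def walsh (m : (ι → Bool) → R) (c : ι → Bool) : R :=
  ∑ a, (-1) ^ weight (c ⊓ a) * m a

lemma sum_filter_walsh_sq (k : ι) (m : (ι → Bool) → R) :
    ∑ c with c k, walsh m c ^ 2 =
      2 ^ (Fintype.card ι - 1) * ∑ a, m a * (m a - m (a ∆ unitVec k)) := by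
  have hsq : ∀ c, walsh m c ^ 2 = ∑ a, ∑ t, (-1) ^ weight (c ⊓ t) * (m a * m (a ∆ t)) := by
    intro c
    rw [sq, walsh, sum_mul_sum]
    refine sum_congr rfl fun a _ => ?_
    rw [← Equiv.sum_comp (symmDiff_right_involutive a).toPerm]
    refine sum_congr rfl fun t _ => ?_
    rw [Function.Involutive.coe_toPerm, mul_mul_mul_comm, neg_one_pow_weight_inf_mul,
      symmDiff_symmDiff_cancel_left]
  calc ∑ c with c k, walsh m c ^ 2
      = ∑ a, ∑ t, ((∑ c with c k, (-1 : ℤ) ^ weight (c ⊓ t) : ℤ) : R) * (m a * m (a ∆ t)) := by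
        simp_rw [hsq]
        rw [sum_comm]
        refine sum_congr rfl fun a _ => ?_
        rw [sum_comm]
        push_cast
        simp only [sum_mul]
    _ = 2 ^ (Fintype.card ι - 1) * ∑ a, m a * (m a - m (a ∆ unitVec k)) := by
        simp only [sum_filter_neg_one_pow_weight_inf, mul_sum]
        refine sum_congr rfl fun a _ => ?_
        push_cast
        simp only [mul_sub, sub_mul, mul_ite, ite_mul, mul_one, mul_zero, zero_mul,
          sum_sub_distrib, sum_ite_eq', mem_univ, if_true, symmDiff_bot]

def quadric (x : (ι → Bool) → R) (w c : ι → Bool) : R :=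
  walsh (fun a => x a * x (a ∆ w)) c

lemma quadric_eq_zero_of_odd (x : (ι → Bool) → R) {w c : ι → Bool}
    (h : Odd (weight (c ⊓ w))) : quadric x w c = 0 := by
  have hw : w ≠ ⊥ := by
    rintro rfl
    simp at h
  -- the involution `a ↦ a ∆ w` preserves `x a * x (a ∆ w)` and flips the sign of the character
  refine sum_ninvolution (· ∆ w) (fun a => ?_) (fun a _ => by simpa using hw)
    (fun _ => mem_univ _) (symmDiff_left_involutive w)
  simp only [symmDiff_symmDiff_cancel_right]
  rw [← neg_one_pow_weight_inf_mul, h.neg_one_pow]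
  ring

end Walsh

section Polynomial

variable {R : Type*} [CommRing R]

lemma quadric_X_isHomogeneous (w c : ι → Bool) :
    (quadric (X : (ι → Bool) → MvPolynomial (ι → Bool) R) w c).IsHomogeneous 2 := by
  refine IsHomogeneous.sum _ _ _ fun a _ => ?_
  have hC : (-1 : MvPolynomial (ι → Bool) R) ^ weight (c ⊓ a) = C ((-1) ^ weight (c ⊓ a)) := by
    simp
  rw [hC]
  exact ((isHomogeneous_X R a).mul (isHomogeneous_X R _)).C_mul _

lemma quadric_X_ne_zero [NeZero (2 : R)] {w c : ι → Bool} (hw : w ≠ ⊥)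
    (h : Even (weight (c ⊓ w))) :
    quadric (X : (ι → Bool) → MvPolynomial (ι → Bool) R) w c ≠ 0 := by
  intro h0
  -- at the indicator of `{⊥, w}` only `a = ⊥` and `a = w` contribute, each with `+1`
  set pt : (ι → Bool) → R := fun v => if v = ⊥ ∨ v = w then 1 else 0
  have heval := congrArg (eval pt) h0
  simp only [quadric, walsh, map_sum, map_mul, map_pow, map_neg, map_one, eval_X, map_zero] at heval
  rw [Fintype.sum_eq_add ⊥ w hw.symm fun v hv => by simp [pt, hv.1, hv.2]] at heval
  simp only [pt, inf_bot_eq, weight_bot, h.neg_one_pow, bot_symmDiff, symmDiff_self] at heval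
  simp [hw, one_add_one_eq_two] at heval
  exact two_ne_zero heval

end Polynomial

section Counting

lemma card_filter_inf_eq (t : ι → Bool) :
    #{p : (ι → Bool) × (ι → Bool) | p.1 ⊓ p.2 = t} = 3 ^ (Fintype.card ι - weight t) := by
  have hind : (#{p : (ι → Bool) × (ι → Bool) | p.1 ⊓ p.2 = t} : ℕ) =
      ∑ p : (ι → Bool) × (ι → Bool), ∏ j, if p.1 j ⊓ p.2 j = t j then 1 else 0 := by
    rw [card_filter]
    exact sum_congr rfl fun p _ => by rw [prod_boole]; simp [funext_iff]
  have hfactor : ∀ j, (3 * (if false = t j then 1 else 0) + if true = t j then 1 else 0 : ℕ) =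
      if t j then 1 else 3 := fun j => by cases t j <;> rfl
  rw [hind, sum_pair_prod_inf (fun j b => if b = t j then 1 else 0)]
  simp only [hfactor, prod_ite, prod_const_one, prod_const, one_mul]
  have := card_filter_add_card_filter_not (s := univ) (fun j => t j = true)
  rw [card_univ] at this
  rw [weight]
  congr 1
  omega

lemma card_filter_inf_mem (T : Finset (ι → Bool)) :
    #{p : (ι → Bool) × (ι → Bool) | p.1 ⊓ p.2 ∈ T} = ∑ t ∈ T, 3 ^ (Fintype.card ι - weight t) := by
  rw [card_eq_sum_card_fiberwise (s := {p : (ι → Bool) × (ι → Bool) | p.1 ⊓ p.2 ∈ T})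
    (f := fun p => p.1 ⊓ p.2) (t := T) fun p hp => (mem_filter.1 hp).2]
  refine sum_congr rfl fun t ht => ?_
  rw [← card_filter_inf_eq, filter_filter]
  congr 1
  exact filter_congr fun p _ => ⟨And.right, fun h => ⟨h ▸ ht, h⟩⟩

lemma two_mul_card_filter_even :
    2 * #{p : (ι → Bool) × (ι → Bool) | Even (weight (p.1 ⊓ p.2))} =
      4 ^ Fintype.card ι + 2 ^ Fintype.card ι := by
  have hchar : ∑ p : (ι → Bool) × (ι → Bool), (-1 : ℤ) ^ weight (p.1 ⊓ p.2) =
      2 ^ Fintype.card ι := by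
    simp only [neg_one_pow_weight, Pi.inf_apply]
    rw [sum_pair_prod_inf (fun _ b => if b then (-1 : ℤ) else 1)]
    norm_num
  have hterm : ∀ p : (ι → Bool) × (ι → Bool),
      (1 + (-1 : ℤ) ^ weight (p.1 ⊓ p.2)) = 2 * if Even (weight (p.1 ⊓ p.2)) then 1 else 0 := by
    intro p
    split_ifs with h
    · rw [h.neg_one_pow]
      norm_num
    · rw [(Nat.not_even_iff_odd.1 h).neg_one_pow]
      norm_num
  have hsum := sum_congr rfl fun p (_ : p ∈ univ) => hterm p
  simp only [sum_add_distrib, hchar, ← mul_sum, sum_boole, sum_const, card_univ,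
    Fintype.card_prod, Fintype.card_fun, Fintype.card_bool, nsmul_eq_mul, mul_one] at hsum
  zify
  rw [← hsum, show (4 : ℤ) = 2 ^ 2 by norm_num, ← pow_mul]
  push_cast
  ring

lemma card_filter_apply_and_weight_eq_two (k₀ : ι) :
    #{t : ι → Bool | t k₀ ∧ weight t = 2} = Fintype.card ι - 1 := by
  rw [← card_univ, ← card_erase_of_mem (mem_univ k₀)]
  symm
  refine card_bij (fun j _ => unitVec k₀ ⊔ unitVec j) (fun j hj => ?_) (fun j₁ hj₁ j₂ _ h => ?_)
    fun t ht => ?_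
  · have hsupp : ({i | (unitVec k₀ ⊔ unitVec j) i} : Finset ι) = {k₀, j} := by
      ext i
      simp [unitVec]
    rw [mem_filter, weight, hsupp, card_pair (ne_of_mem_erase hj).symm]
    simp [unitVec]
  · simpa [unitVec, (ne_of_mem_erase hj₁)] using congrFun h j₁
  · obtain ⟨htk, ht2⟩ := (mem_filter.1 ht).2
    have hk : k₀ ∈ ({i | t i} : Finset ι) := by simp [htk]
    obtain ⟨j, hj⟩ := card_eq_one.1 (by rw [card_erase_of_mem hk, ← weight, ht2] :
      #(({i | t i} : Finset ι).erase k₀) = 1)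
    have hsupp : ∀ i, t i ↔ i = k₀ ∨ i = j := fun i => by
      by_cases hi : i = k₀
      · simp [hi, htk]
      · have := congrArg (i ∈ ·) hj
        simpa [hi] using this
    refine ⟨j, mem_erase.2 ⟨ne_of_mem_erase (hj ▸ mem_singleton_self j), mem_univ j⟩,
      funext fun i => ?_⟩
    have := hsupp i
    cases h : t i <;> simp_all [unitVec]

end Counting

end BoolCube

section Padding

lemma exists_sum_sq_eq_of_succ_le {σ : Type*} {d G N : ℕ} (r : Fin (G + 1) → MvPolynomial σ ℝ)
    (hr : ∀ i, (r i).IsHomogeneous d ∧ r i ≠ 0) (hN : G + 1 ≤ N) :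
    ∃ p : Fin N → MvPolynomial σ ℝ,
      (∀ i, (p i).IsHomogeneous d ∧ p i ≠ 0) ∧ ∑ i, r i ^ 2 = ∑ i, p i ^ 2 := by
  obtain ⟨K, rfl⟩ : ∃ K, N = G + (K + 1) := ⟨N - G - 1, by omega⟩
  -- the last square is split into `K + 1` copies of `(r last / √(K + 1))²`
  set c : ℝ := (√(K + 1 : ℝ))⁻¹ with hc_def
  have hc : c ≠ 0 := inv_ne_zero (Real.sqrt_ne_zero'.2 (by positivity))
  have hc2 : (K + 1 : ℝ) * c ^ 2 = 1 := by
    rw [hc_def, inv_pow, Real.sq_sqrt (by positivity), mul_inv_cancel₀ (by positivity)]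
  refine ⟨Fin.append (fun i => r i.castSucc) fun _ => C c * r (Fin.last G), fun i => ?_, ?_⟩
  · refine Fin.addCases (fun i => ?_) (fun i => ?_) i
    · simpa using hr _
    · rw [Fin.append_right]
      exact ⟨(hr _).1.C_mul c, mul_ne_zero (C_ne_zero.2 hc) (hr _).2⟩
  · rw [Fin.sum_univ_castSucc, Fin.sum_univ_add]
    simp only [Fin.append_left, Fin.append_right, sum_const, card_univ, Fintype.card_fin,
      nsmul_eq_mul, mul_pow, ← map_pow]
    congr 1
    rw [← mul_assoc, ← map_natCast C, ← map_mul]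
    push_cast
    rw [hc2, map_one, one_mul]

lemma exists_fin_sum_sq_eq {σ α : Type*} {d N : ℕ} (s : Finset α) (q : α → MvPolynomial σ ℝ)
    (hq : ∀ a ∈ s, (q a).IsHomogeneous d ∧ q a ≠ 0) (hN : #s ≤ N) (hs : s.Nonempty ∨ N = 0) :
    ∃ p : Fin N → MvPolynomial σ ℝ,
      (∀ i, (p i).IsHomogeneous d ∧ p i ≠ 0) ∧ ∑ a ∈ s, q a ^ 2 = ∑ i, p i ^ 2 := by
  rcases hs with hs | rfl
  · obtain ⟨G, hG⟩ : ∃ G, #s = G + 1 := Nat.exists_eq_succ_of_ne_zero hs.card_pos.ne'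
    set e := s.equivFin.trans (finCongr hG)
    obtain ⟨p, hp, hsum⟩ :=
      exists_sum_sq_eq_of_succ_le (fun i => q (e.symm i)) (fun i => hq _ (e.symm i).2) (hG ▸ hN)
    refine ⟨p, hp, ?_⟩
    rw [← hsum, ← sum_coe_sort s, ← e.symm.sum_comp]
  · obtain rfl : s = ∅ := card_eq_zero.1 (Nat.le_zero.1 hN)
    exact ⟨finZeroElim, finZeroElim, by simp⟩

end Padding

namespace GramSOS

open BoolCube

section Coefficients

variable {ι : Type*} [Fintype ι]

def sosCoeff (k₀ : ι) (t : ι → Bool) : ℤ := weight t - 2 * if t k₀ then 1 else 0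

def sosPairs [DecidableEq ι] (k₀ : ι) : Finset ((ι → Bool) × (ι → Bool)) :=
  {p | Even (weight (p.1 ⊓ p.2)) ∧ 0 < sosCoeff k₀ (p.1 ⊓ p.2)}

lemma sosCoeff_nonneg {k₀ : ι} {t : ι → Bool} (ht : Even (weight t)) : 0 ≤ sosCoeff k₀ t := by
  unfold sosCoeff
  split_ifs with h
  · have : 0 < weight t := card_pos.2 ⟨k₀, by simp [h]⟩
    obtain ⟨m, hm⟩ := ht
    omega
  · simp

lemma not_pos_sosCoeff_iff {k₀ : ι} {t : ι → Bool} (ht : Even (weight t)) :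
    ¬ 0 < sosCoeff k₀ t ↔ t = ⊥ ∨ (t k₀ ∧ weight t = 2) := by
  rw [← weight_eq_zero_iff, sosCoeff]
  by_cases h : t k₀
  · have : 0 < weight t := card_pos.2 ⟨k₀, by simp [h]⟩
    obtain ⟨m, hm⟩ := ht
    simp only [h, if_true, true_and]
    omega
  · simp [h]

variable [DecidableEq ι]

lemma card_sosPairs (k₀ : ι) :
    2 * #(sosPairs k₀) + 2 * 3 ^ Fintype.card ι +
        2 * ((Fintype.card ι - 1) * 3 ^ (Fintype.card ι - 2)) =
      4 ^ Fintype.card ι + 2 ^ Fintype.card ι := by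
  set B : Finset (ι → Bool) := {t | t = ⊥ ∨ (t k₀ ∧ weight t = 2)}
  have hsplit : #{p : (ι → Bool) × (ι → Bool) | Even (weight (p.1 ⊓ p.2))} =
      #(sosPairs k₀) + #{p : (ι → Bool) × (ι → Bool) | p.1 ⊓ p.2 ∈ B} := by
    rw [← card_filter_add_card_filter_not (fun p => 0 < sosCoeff k₀ (p.1 ⊓ p.2)), sosPairs,
      filter_filter, filter_filter]
    congr 2
    refine filter_congr fun p _ => ?_
    have hB : p.1 ⊓ p.2 ∈ B ↔ p.1 ⊓ p.2 = ⊥ ∨ ((p.1 ⊓ p.2) k₀ ∧ weight (p.1 ⊓ p.2) = 2) := by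
      simp [B]
    refine ⟨fun ⟨he, hn⟩ => hB.2 ((not_pos_sosCoeff_iff he).1 hn), fun h => ?_⟩
    have he : Even (weight (p.1 ⊓ p.2)) := by
      rcases hB.1 h with h | h
      · simp [h]
      · simp [h.2]
    exact ⟨he, (not_pos_sosCoeff_iff he).2 (hB.1 h)⟩
  have hcardB : #{p : (ι → Bool) × (ι → Bool) | p.1 ⊓ p.2 ∈ B} =
      3 ^ Fintype.card ι + (Fintype.card ι - 1) * 3 ^ (Fintype.card ι - 2) := by
    have hB : B = insert ⊥ ({t | t k₀ ∧ weight t = 2} : Finset (ι → Bool)) := by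
      ext t
      simp [B]
    rw [card_filter_inf_mem, hB, sum_insert (by simp), weight_bot, Nat.sub_zero,
      sum_congr rfl fun t ht => by rw [(mem_filter.1 ht).2.2], sum_const,
      card_filter_apply_and_weight_eq_two, smul_eq_mul]
  rw [← two_mul_card_filter_even, hsplit, hcardB]
  ring

lemma sosPairs_nonempty (k₀ : ι) (h : 3 ≤ Fintype.card ι) : (sosPairs k₀).Nonempty := by
  obtain ⟨j₁, hj₁, j₂, hj₂, hne⟩ := one_lt_card.1 (by
    rw [card_erase_of_mem (mem_univ k₀), card_univ]
    omega : 1 < #(univ.erase k₀))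
  set t := unitVec j₁ ⊔ unitVec j₂
  have hsupp : ({i | t i} : Finset ι) = {j₁, j₂} := by
    ext i
    simp [t, unitVec]
  refine ⟨(t, t), mem_filter.2 ⟨mem_univ _, ?_⟩⟩
  simp only [inf_idem, sosCoeff, weight, hsupp, card_pair hne]
  simp [t, unitVec, (ne_of_mem_erase hj₁).symm, (ne_of_mem_erase hj₂).symm]

end Coefficients

variable {n : ℕ}

lemma iotaIdx_eq_funSplitAt_symm (k : Fin n) (b : Bool) (r : {j : Fin n // j ≠ k} → Bool) :
    iotaIdx n k b r = (Equiv.funSplitAt k Bool).symm (b, r) := by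
  funext j
  simp [iotaIdx, Equiv.funSplitAt_symm_apply]

lemma sum_eq_sum_iotaIdx {M : Type*} [AddCommMonoid M] (k : Fin n) (f : (Fin n → Bool) → M) :
    ∑ a, f a = ∑ b, ∑ r, f (iotaIdx n k b r) := by
  rw [← (Equiv.funSplitAt k Bool).symm.sum_comp, Fintype.sum_prod_type]
  simp only [iotaIdx_eq_funSplitAt_symm]

lemma sum_filter_eq_sum_iotaIdx {M : Type*} [AddCommMonoid M] (k : Fin n)
    (f : (Fin n → Bool) → M) : ∑ a with a k, f a = ∑ r, f (iotaIdx n k true r) := by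
  rw [sum_filter, sum_eq_sum_iotaIdx k, Fintype.sum_bool]
  simp [iotaIdx]

lemma iotaIdx_symmDiff (k : Fin n) (b b' : Bool) (r r' : {j : Fin n // j ≠ k} → Bool) :
    iotaIdx n k b r ∆ iotaIdx n k b' r' = iotaIdx n k (b ∆ b') (r ∆ r') := by
  funext j
  by_cases h : j = k <;> simp [iotaIdx, h]

lemma unitVec_eq_iotaIdx (k : Fin n) : unitVec k = iotaIdx n k true ⊥ := by
  funext j
  by_cases h : j = k <;> simp [iotaIdx, unitVec, h]

lemma sum_sum_quadric_sq (k : Fin n) :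
    ∑ w with w k, ∑ c with c k, quadric (X : _ → MvPolynomial (Fin n → Bool) ℝ) w c ^ 2 =
      2 ^ n * gramDetPoly n k := by
  -- Parseval in `c`, then `a = ι(b, r)` and `w = ι(1, s)`: each `b` gives one copy of `d_k`
  simp_rw [quadric, sum_filter_walsh_sq, ← mul_sum, sum_filter_eq_sum_iotaIdx k]
  simp_rw [sum_eq_sum_iotaIdx k]
  simp only [unitVec_eq_iotaIdx, iotaIdx_symmDiff, Fintype.card_fin, Bool.symmDiff_eq_xor,
    symmDiff_bot, Fintype.sum_bool, Bool.true_xor, Bool.false_xor, Bool.not_true]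
  rw [sum_add_distrib, sum_sum_symmDiff_mul_mul_sub (fun r => X (iotaIdx n k true r))
      (fun r => X (iotaIdx n k false r)),
    sum_sum_symmDiff_mul_mul_sub (fun r => X (iotaIdx n k false r))
      (fun r => X (iotaIdx n k true r)), gramDetPoly,
    show (2 : MvPolynomial (Fin n → Bool) ℝ) ^ n = 2 ^ (n - 1) * 2 by
      rw [← pow_succ, Nat.sub_add_cancel k.pos]]
  simp only [mul_comm (X (iotaIdx n k true _)) (X (iotaIdx n k false _))]
  ring

lemma two_pow_mul_gramDiff (k₀ : Fin n) :
    2 ^ n * ((∑ k ∈ univ.erase k₀, gramDetPoly n k) - gramDetPoly n k₀) =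
      ∑ p : (Fin n → Bool) × (Fin n → Bool),
        (sosCoeff k₀ (p.1 ⊓ p.2) : MvPolynomial (Fin n → Bool) ℝ) * quadric X p.1 p.2 ^ 2 := by
  have hk : ∀ k, 2 ^ n * gramDetPoly n k = ∑ p : (Fin n → Bool) × (Fin n → Bool),
      (if (p.1 ⊓ p.2) k then 1 else 0) * quadric X p.1 p.2 ^ 2 := by
    intro k
    rw [← sum_sum_quadric_sq, Fintype.sum_prod_type, sum_filter]
    refine sum_congr rfl fun w _ => ?_
    by_cases hw : w k <;> simp [hw, sum_filter]
  rw [mul_sub, mul_sum, hk k₀]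
  simp_rw [hk]
  rw [sum_comm, ← sum_sub_distrib]
  refine sum_congr rfl fun p _ => ?_
  rw [← sum_mul, ← sub_mul, sum_erase_eq_sub (mem_univ _), sum_boole]
  simp only [sosCoeff, weight]
  push_cast
  ring

noncomputable def sosSquare (k₀ : Fin n) (p : (Fin n → Bool) × (Fin n → Bool)) :
    MvPolynomial (Fin n → Bool) ℝ :=
  C √(sosCoeff k₀ (p.1 ⊓ p.2) / 2 ^ n) * quadric X p.1 p.2

lemma gramDiff_eq_sum_sosSquare_sq (k₀ : Fin n) :
    (∑ k ∈ univ.erase k₀, gramDetPoly n k) - gramDetPoly n k₀ =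
      ∑ p ∈ sosPairs k₀, sosSquare k₀ p ^ 2 := by
  refine mul_left_cancel₀ (pow_ne_zero n two_ne_zero) ?_
  have hvanish : ∀ p ∉ sosPairs k₀,
      (sosCoeff k₀ (p.1 ⊓ p.2) : MvPolynomial (Fin n → Bool) ℝ) * quadric X p.1 p.2 ^ 2 = 0 := by
    intro p hp
    by_cases heven : Even (weight (p.1 ⊓ p.2))
    · have hzero : sosCoeff k₀ (p.1 ⊓ p.2) = 0 :=
        le_antisymm (not_lt.1 fun h => hp (by simp [sosPairs, heven, h])) (sosCoeff_nonneg heven)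
      simp [hzero]
    · rw [Nat.not_even_iff_odd, inf_comm] at heven
      simp [quadric_eq_zero_of_odd _ heven]
  rw [two_pow_mul_gramDiff, ← sum_subset (subset_univ _) fun p _ hp => hvanish p hp, mul_sum]
  refine sum_congr rfl fun p hp => ?_
  have hnonneg : (0 : ℝ) ≤ sosCoeff k₀ (p.1 ⊓ p.2) / 2 ^ n :=
    div_nonneg (by exact_mod_cast (mem_filter.1 hp).2.2.le) (by positivity)
  rw [sosSquare, mul_pow, ← map_pow, Real.sq_sqrt hnonneg, ← mul_assoc]
  congr 1
  rw [show (2 : MvPolynomial (Fin n → Bool) ℝ) = C 2 from rfl, ← map_pow, ← map_mul,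
    mul_div_cancel₀ _ (by positivity), map_intCast]

lemma sosSquare_isHomogeneous (k₀ : Fin n) (p : (Fin n → Bool) × (Fin n → Bool)) :
    (sosSquare k₀ p).IsHomogeneous 2 :=
  (quadric_X_isHomogeneous p.1 p.2).C_mul _

lemma sosSquare_ne_zero {k₀ : Fin n} {p : (Fin n → Bool) × (Fin n → Bool)}
    (hp : p ∈ sosPairs k₀) : sosSquare k₀ p ≠ 0 := by
  obtain ⟨heven, hpos⟩ := (mem_filter.1 hp).2
  have hw : p.1 ≠ ⊥ := by
    rintro h
    simp [h, sosCoeff] at hpos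
  refine mul_ne_zero (C_ne_zero.2 (Real.sqrt_pos.2 (div_pos ?_ (by positivity))).ne')
    (quadric_X_ne_zero hw (by rwa [inf_comm]))
  exact_mod_cast hpos

-- `2^(n-3)` is factored out so that the truncated ℕ subtractions give the right value for
-- every `n ≥ 2` (at `n = 2` the second factor is `0`)
def sosCount (n : ℕ) : ℕ := 2 ^ (n - 3) * (2 ^ (n - 2) * (3 * n - 5) - (n ^ 2 - n - 1))

lemma sosCount_add_three (m : ℕ) :
    (sosCount (m + 3) : ℚ) = 2 ^ (2 * m + 1) * (3 * m + 4) - 2 ^ m * (m ^ 2 + 5 * m + 5) := by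
  have hsq : (m + 3) ^ 2 - (m + 3) - 1 = m ^ 2 + 5 * m + 5 := by
    have : (m + 3) ^ 2 = m ^ 2 + 5 * m + 5 + (m + 3) + 1 := by ring
    omega
  have hle : m ^ 2 + 5 * m + 5 ≤ 2 ^ (m + 1) * (3 * m + 4) := by
    have := Nat.lt_two_pow_self (n := m + 1)
    nlinarith
  rw [sosCount, show m + 3 - 3 = m by omega, show m + 3 - 2 = m + 1 by omega,
    show 3 * (m + 3) - 5 = 3 * m + 4 by omega, hsq, Nat.cast_mul, Nat.cast_sub hle]
  push_cast
  ring

lemma sosCount_cast {n : ℕ} (hn : 2 ≤ n) :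
    (sosCount n : ℚ) = 2 ^ (2 * (n : ℤ) - 5) * (3 * (n : ℚ) - 5) -
      2 ^ ((n : ℤ) - 3) * ((n : ℚ) ^ 2 - n - 1) := by
  rcases hn.eq_or_lt with rfl | h3
  · norm_num [sosCount]
  obtain ⟨m, rfl⟩ : ∃ m, n = m + 3 := ⟨n - 3, by omega⟩
  rw [sosCount_add_three, show 2 * ((m + 3 : ℕ) : ℤ) - 5 = ((2 * m + 1 : ℕ) : ℤ) by push_cast; ring,
    show ((m + 3 : ℕ) : ℤ) - 3 = (m : ℤ) by push_cast; ring, zpow_natCast, zpow_natCast]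
  push_cast
  ring

lemma sq_add_mul_two_pow_le (m : ℕ) (hm : 2 ≤ m) :
    (m ^ 2 + 5 * m + 9) * 2 ^ m ≤ (3 * m + 33) * 3 ^ m := by
  induction m, hm using Nat.le_induction with
  | base => norm_num
  | succ m hm ih =>
    have hquad : 2 * ((m + 1) ^ 2 + 5 * (m + 1) + 9) ≤ 3 * (m ^ 2 + 5 * m + 9) := by nlinarith
    calc ((m + 1) ^ 2 + 5 * (m + 1) + 9) * 2 ^ (m + 1)
        = 2 * ((m + 1) ^ 2 + 5 * (m + 1) + 9) * 2 ^ m := by ring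
      _ ≤ 3 * (m ^ 2 + 5 * m + 9) * 2 ^ m := Nat.mul_le_mul_right _ hquad
      _ ≤ 3 * ((3 * m + 33) * 3 ^ m) := by rw [mul_assoc]; exact Nat.mul_le_mul_left _ ih
      _ ≤ (3 * (m + 1) + 33) * 3 ^ (m + 1) := by
        rw [pow_succ]
        nlinarith [pow_pos (by norm_num : (0 : ℕ) < 3) m]

lemma le_sosCount {n G : ℕ} (hn : 2 ≤ n)
    (hG : 2 * G + 2 * 3 ^ n + 2 * ((n - 1) * 3 ^ (n - 2)) = 4 ^ n + 2 ^ n) : G ≤ sosCount n := by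
  rcases hn.eq_or_lt with rfl | h3
  · norm_num at hG
    omega
  obtain ⟨m, rfl⟩ : ∃ m, n = m + 3 := ⟨n - 3, by omega⟩
  rw [← Nat.cast_le (α := ℚ), sosCount_add_three]
  have hkey : (64 * 4 ^ m + (2 * m ^ 2 + 10 * m + 18) * 2 ^ m : ℚ) ≤
      (12 * m + 16) * 4 ^ m + (6 * m + 66) * 3 ^ m := by
    rcases lt_or_ge m 4 with hm | hm
    · interval_cases m <;> norm_num
    · have h4 : (64 : ℚ) * 4 ^ m ≤ (12 * m + 16) * 4 ^ m := by
        gcongr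
        exact_mod_cast (by omega : 64 ≤ 12 * m + 16)
      have : ((m ^ 2 + 5 * m + 9) * 2 ^ m : ℚ) ≤ (3 * m + 33) * 3 ^ m := by
        exact_mod_cast sq_add_mul_two_pow_le m (by omega)
      linarith
  rw [show m + 3 - 1 = m + 2 by omega, show m + 3 - 2 = m + 1 by omega] at hG
  have hGq : (2 * G + 2 * 3 ^ (m + 3) + 2 * ((m + 2) * 3 ^ (m + 1)) : ℚ) =
      4 ^ (m + 3) + 2 ^ (m + 3) := by
    exact_mod_cast hG
  have h4 : (4 : ℚ) ^ m = 2 ^ (2 * m) := by rw [pow_mul]; norm_num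
  simp only [pow_succ, h4] at hGq hkey ⊢
  nlinarith [hGq, hkey]

end GramSOS

open GramSOS

/-- The quartic `d₂ + ⋯ + d_n - d₁` is a sum of exactly
`N = 2^(2n-5)(3n-5) - 2^(n-3)(n²-n-1)` squares of nonzero homogeneous quadrics, where
`N` is a non-negative integer for all `n ≥ 2`. -/
theorem gramDiff_sos_count (n : ℕ) (hn : 2 ≤ n) :
    ∃ N : ℕ,
      (N : ℚ) = (2 : ℚ) ^ (2 * (n : ℤ) - 5) * (3 * (n : ℚ) - 5) -
        (2 : ℚ) ^ ((n : ℤ) - 3) * ((n : ℚ) ^ 2 - (n : ℚ) - 1) ∧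
      ∃ p : Fin N → MvPolynomial (Fin n → Bool) ℝ,
        (∀ i : Fin N, (p i).IsHomogeneous 2 ∧ p i ≠ 0) ∧
        (∑ k ∈ Finset.univ.erase (⟨0, by omega⟩ : Fin n), gramDetPoly n k) -
            gramDetPoly n ⟨0, by omega⟩ =
          ∑ i : Fin N, (p i) ^ 2 := by
  set k₀ : Fin n := ⟨0, by omega⟩
  have hcount : #(sosPairs k₀) ≤ sosCount n := le_sosCount hn (by simpa using card_sosPairs k₀)
  have hne : (sosPairs k₀).Nonempty ∨ sosCount n = 0 := by
    rcases hn.eq_or_lt with rfl | h3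
    · exact Or.inr rfl
    · exact Or.inl (sosPairs_nonempty k₀ (by rw [Fintype.card_fin]; exact h3))
  obtain ⟨p, hp, hsum⟩ := exists_fin_sum_sq_eq (sosPairs k₀) (sosSquare k₀)
    (fun _ ha => ⟨sosSquare_isHomogeneous k₀ _, sosSquare_ne_zero ha⟩) hcount hne
  exact ⟨sosCount n, sosCount_cast hn, p, hp, (gramDiff_eq_sum_sosSquare_sq k₀).trans hsum⟩
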